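/- Let n = 2, c = 2, and O = {a, b, c, d}, and let f be an anonymous, neutral, SD-efficient assignment rule. At the profile where agent 1 reports b ≻ a ≻ c ≻ d and agent 2 reports b ≻ c ≻ a ≻ d, f must return the random assignment giving agent 1 object a with probability 1 and objects b and d each with probability 1/2, and agent 2 object c with probability 1 and objects b and d each with probability 1/2. -/

import Mathlib

open Finset
open scoped Classical

/-- A (binary-relation) preference over `m` objects; `R a b` means `a ≿ b`. -/
abbrev Pref (m : ℕ) := Fin m → Fin m → Prop

/-- A strict (linear) preference: reflexive, transitive, antisymmetric and total
weak relation `≿`, i.e. a linear order on the objects. -/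
def IsStrictPref {m : ℕ} (R : Pref m) : Prop :=
  (∀ a, R a a) ∧ (∀ a b c, R a b → R b c → R a c) ∧
  (∀ a b, R a b → R b a → a = b) ∧ (∀ a b, R a b ∨ R b a)

/-- A profile of strict preferences, one for each agent. -/
def ValidProfile {n m : ℕ} (pref : Fin n → Pref m) : Prop :=
  ∀ i, IsStrictPref (pref i)

/-- `x` (first-order) stochastically dominates `y` w.r.t. preference `R`:
for every object `o`, the total mass on objects weakly preferred to `o`
under `x` is at least that under `y`. -/
def sdPrefers {m : ℕ} (R : Pref m) (x y : Fin m → ℝ) : Prop :=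
  ∀ o : Fin m,
    ∑ o' ∈ univ.filter (fun o' => R o' o), x o' ≥
    ∑ o' ∈ univ.filter (fun o' => R o' o), y o'

/-- Strict stochastic dominance. -/
def sdStrict {m : ℕ} (R : Pref m) (x y : Fin m → ℝ) : Prop :=
  sdPrefers R x y ∧ ¬ sdPrefers R y x

/-- Strict downward-lexicographic (DL) preference of `x` over `y`:
at the most preferred object where they differ, `x` gives more. -/
def dlStrict {m : ℕ} (R : Pref m) (x y : Fin m → ℝ) : Prop :=
  ∃ o : Fin m, x o > y o ∧ ∀ o', x o' ≠ y o' → R o o'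

/-- Weak DL preference. -/
def dlPrefers {m : ℕ} (R : Pref m) (x y : Fin m → ℝ) : Prop :=
  x = y ∨ dlStrict R x y

/-- A random assignment: entries in `[0,1]`, every object fully allocated
(column sums `1`), every agent receiving `c` units (row sums `c`). -/
def IsRandomAssignment (n m c : ℕ) (p : Fin n → Fin m → ℝ) : Prop :=
  (∀ i o, 0 ≤ p i o ∧ p i o ≤ 1) ∧
  (∀ o, ∑ i, p i o = 1) ∧
  (∀ i, ∑ o, p i o = (c : ℝ))

/-- A discrete (0/1) matrix. -/
def IsDiscreteMat (n m : ℕ) (p : Fin n → Fin m → ℝ) : Prop :=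
  ∀ i o, p i o = 0 ∨ p i o = 1

/-- `p` is SD-efficient at profile `pref`: no random assignment `q` weakly
SD-dominates it for everyone and strictly for someone. -/
def SDEfficientAssignment (n m c : ℕ) (pref : Fin n → Pref m)
    (p : Fin n → Fin m → ℝ) : Prop :=
  ¬ ∃ q : Fin n → Fin m → ℝ, IsRandomAssignment n m c q ∧
      (∀ i, sdPrefers (pref i) (q i) (p i)) ∧
      ∃ j, sdStrict (pref j) (q j) (p j)

/-- Anonymity of an assignment rule: permuting the agents' reports permutes
their allocations accordingly. -/
def Anonymous (n m : ℕ) (f : (Fin n → Pref m) → Fin n → Fin m → ℝ) : Prop :=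
  ∀ (pref : Fin n → Pref m) (σ : Equiv.Perm (Fin n)), ValidProfile pref →
    ∀ i, f (fun j => pref (σ j)) i = f pref (σ i)

/-- Neutrality of an assignment rule: relabelling the objects (in all
preferences) relabels the returned assignment accordingly. -/
def Neutral (n m : ℕ) (f : (Fin n → Pref m) → Fin n → Fin m → ℝ) : Prop :=
  ∀ (pref : Fin n → Pref m) (τ : Equiv.Perm (Fin m)), ValidProfile pref →
    ∀ i o, f (fun j a b => pref j (τ.symm a) (τ.symm b)) i o = f pref i (τ.symm o)

/-- Weak SD-strategyproofness: no agent can misreport and obtain an allocation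
he strictly SD-prefers (w.r.t. his true preference). -/
def WeakSDSP (n m : ℕ) (f : (Fin n → Pref m) → Fin n → Fin m → ℝ) : Prop :=
  ¬ ∃ (pref : Fin n → Pref m) (i : Fin n) (R' : Pref m),
      ValidProfile pref ∧ IsStrictPref R' ∧
      sdStrict (pref i) (f (Function.update pref i R') i) (f pref i)

/-- Weak SD group-strategyproofness: no nonempty coalition can jointly
misreport so that every member strictly SD-prefers the new allocation. -/
def WeakSDGroupSP (n m : ℕ) (f : (Fin n → Pref m) → Fin n → Fin m → ℝ) : Prop :=
  ¬ ∃ (pref pref' : Fin n → Pref m) (S : Finset (Fin n)),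
      ValidProfile pref ∧ S.Nonempty ∧
      (∀ i ∈ S, IsStrictPref (pref' i)) ∧
      (∀ i ∉ S, pref' i = pref i) ∧
      ∀ i ∈ S, sdStrict (pref i) (f pref' i) (f pref i)

/-- DL-strategyproofness: truth-telling always yields a weakly DL-preferred
allocation. -/
def DLSP (n m : ℕ) (f : (Fin n → Pref m) → Fin n → Fin m → ℝ) : Prop :=
  ∀ (pref : Fin n → Pref m) (i : Fin n) (R' : Pref m),
    ValidProfile pref → IsStrictPref R' →
    dlPrefers (pref i) (f pref i) (f (Function.update pref i R') i)

/-- The set of the `c` most preferred objects under the strict preference `R`: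
objects having at most `c` objects weakly preferred to them. -/
noncomputable def topSet (m c : ℕ) (R : Pref m) : Finset (Fin m) :=
  univ.filter (fun o => (univ.filter (fun o' => R o' o)).card ≤ c)

/-- A perfect assignment: every agent receives each of his `c` most preferred
objects with probability `1`. -/
def PerfectAssignment (n m c : ℕ) (pref : Fin n → Pref m) (p : Fin n → Fin m → ℝ) : Prop :=
  ∀ i, ∀ o ∈ topSet m c (pref i), p i o = 1

/-- Ex post efficiency: `p` is a convex combination of SD-efficient discrete
assignments. -/
def ExPostEfficient (n m c : ℕ) (pref : Fin n → Pref m)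
    (p : Fin n → Fin m → ℝ) : Prop :=
  ∃ (k : ℕ) (w : Fin k → ℝ) (d : Fin k → Fin n → Fin m → ℝ),
    (∀ j, 0 ≤ w j) ∧ (∑ j, w j = 1) ∧
    (∀ j, IsDiscreteMat n m (d j) ∧ IsRandomAssignment n m c (d j) ∧
          SDEfficientAssignment n m c pref (d j)) ∧
    (∀ i o, p i o = ∑ j, w j * d j i o)

/-- A (possibly unbalanced) 0/1 allocation matrix: 0/1 entries, every object
assigned to exactly one agent. -/
def ZeroOneAlloc (n m : ℕ) (p : Fin n → Fin m → ℝ) : Prop :=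
  (∀ i o, p i o = 0 ∨ p i o = 1) ∧ (∀ o, ∑ i, p i o = 1)

/-- Pareto optimality among 0/1 allocation matrices (w.r.t. SD comparisons). -/
def ParetoOptAlloc (n m : ℕ) (pref : Fin n → Pref m)
    (p : Fin n → Fin m → ℝ) : Prop :=
  ZeroOneAlloc n m p ∧
  ¬ ∃ q : Fin n → Fin m → ℝ, ZeroOneAlloc n m q ∧
      (∀ i, sdPrefers (pref i) (q i) (p i)) ∧
      ∃ j, sdStrict (pref j) (q j) (p j)

/-- `p` is the outcome of the priority (serial dictator) rule for the agent
ordering `σ`: it is a discrete assignment in which, sequentially, agent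
`σ k` receives his `c` most preferred objects among those not taken by the
earlier agents `σ 0, …, σ (k-1)`. -/
def PriorityOutcome (n m c : ℕ) (pref : Fin n → Pref m) (σ : Equiv.Perm (Fin n))
    (p : Fin n → Fin m → ℝ) : Prop :=
  IsDiscreteMat n m p ∧ IsRandomAssignment n m c p ∧
  ∀ (k : Fin n) (o : Fin m), (∀ j, j < k → p (σ j) o ≠ 1) →
    (p (σ k) o = 1 ↔
      (univ.filter (fun o' => (∀ j, j < k → p (σ j) o' ≠ 1) ∧ pref (σ k) o' o)).card ≤ c)

/-- The strict preference induced by a ranking function (smaller rank =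
more preferred). -/
def prefOfRank {m : ℕ} (r : Fin m → ℕ) : Pref m := fun a b => r a ≤ r b

/-!
Swapping the two agents together with the objects `a` and `c` maps the profile to itself, so
anonymity and neutrality force the outcome to be invariant under this symmetry. With the column
sums this pins it down to a one-parameter family in which each agent gets `b` and `d` with
probability `1/2` and agent 1 gets `c` with some probability `t`. For `t > 0` the member with
`t = 0` SD-dominates it (agent 1 trades his share of `c` for agent 2's share of `a`), so
SD-efficiency leaves only `t = 0`.
-/

lemma isStrictPref_prefOfRank {m : ℕ} {r : Fin m → ℕ} (hr : Function.Injective r) :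
    IsStrictPref (prefOfRank r) :=
  ⟨fun _ => le_refl _, fun _ _ _ => le_trans,
   fun _ _ h₁ h₂ => hr (le_antisymm h₁ h₂), fun _ _ => le_total _ _⟩

lemma apply_eq_apply_of_profile_invariant {n m : ℕ} {f : (Fin n → Pref m) → Fin n → Fin m → ℝ}
    (hAnon : Anonymous n m f) (hNeut : Neutral n m f) {pref : Fin n → Pref m}
    (hpref : ValidProfile pref) (σ : Equiv.Perm (Fin n)) (τ : Equiv.Perm (Fin m))
    (hinv : (fun j a b => pref (σ j) (τ.symm a) (τ.symm b)) = pref) (i : Fin n) (o : Fin m) :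
    f pref i o = f pref (σ i) (τ.symm o) := by
  have hrelabel := hNeut (fun j => pref (σ j)) τ (fun j => hpref (σ j)) i o
  rw [hinv] at hrelabel
  rw [hrelabel, hAnon pref σ hpref i]

abbrev bacdBcadProfile : Fin 2 → Pref 4 :=
  ![prefOfRank ![1, 0, 2, 3], prefOfRank ![2, 0, 1, 3]]

lemma validProfile_bacdBcadProfile : ValidProfile bacdBcadProfile := by
  intro i
  fin_cases i <;>
    exact isStrictPref_prefOfRank (by decide)

lemma bacdBcadProfile_swap_invariant :
    (fun j a b => bacdBcadProfile (Equiv.swap 0 1 j) ((Equiv.swap 0 2).symm a)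
      ((Equiv.swap 0 2).symm b)) = bacdBcadProfile := by
  funext j a b
  rw [eq_iff_iff]
  fin_cases j <;> fin_cases a <;> fin_cases b <;>
    simp [prefOfRank, Equiv.swap_apply_def]

noncomputable abbrev symmetricAssignment (t : ℝ) : Fin 2 → Fin 4 → ℝ :=
  ![![1 - t, 1/2, t, 1/2], ![t, 1/2, 1 - t, 1/2]]

lemma eq_symmetricAssignment {p : Fin 2 → Fin 4 → ℝ} (hcol : ∀ o, ∑ i, p i o = 1)
    (hsym : ∀ i o, p i o = p (Equiv.swap 0 1 i) ((Equiv.swap 0 2).symm o)) :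
    p = symmetricAssignment (p 0 2) := by
  have hsum : ∀ o, p 0 o + p 1 o = 1 := fun o => by simpa [Fin.sum_univ_two] using hcol o
  have ha : p 0 0 = p 1 2 := hsym 0 0
  have hb : p 0 1 = p 1 1 := hsym 0 1
  have hc : p 0 2 = p 1 0 := hsym 0 2
  have hd : p 0 3 = p 1 3 := hsym 0 3
  funext i o
  fin_cases i <;> fin_cases o <;> simp <;> linarith [hsum 0, hsum 1, hsum 2, hsum 3]

lemma isRandomAssignment_symmetricAssignment_zero :
    IsRandomAssignment 2 4 2 (symmetricAssignment 0) := by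
  refine ⟨fun i o => ?_, fun o => ?_, fun i => ?_⟩
  · fin_cases i <;> fin_cases o <;> norm_num
  · fin_cases o <;> norm_num [Fin.sum_univ_two]
  · fin_cases i <;> norm_num [Fin.sum_univ_four, Matrix.cons_val_two, Matrix.cons_val_three]

lemma sdPrefers_symmetricAssignment_zero {t : ℝ} (ht : 0 ≤ t) (i : Fin 2) :
    sdPrefers (bacdBcadProfile i) (symmetricAssignment 0 i) (symmetricAssignment t i) := by
  intro o
  fin_cases i <;> fin_cases o <;>
    norm_num [Finset.sum_filter, Fin.sum_univ_four, prefOfRank, Matrix.cons_val_two,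
      Matrix.cons_val_three] <;> linarith

lemma not_sdPrefers_symmetricAssignment_zero {t : ℝ} (ht : 0 < t) :
    ¬ sdPrefers (bacdBcadProfile 0) (symmetricAssignment t 0) (symmetricAssignment 0 0) := by
  intro h
  have hupper_a := h 0
  norm_num [Finset.sum_filter, Fin.sum_univ_four, prefOfRank, Matrix.cons_val_two,
      Matrix.cons_val_three] at hupper_a
  linarith

/-- With `n = 2`, `c = 2`, objects `a,b,c,d` (indices
`0,1,2,3`): any anonymous, neutral, SD-efficient assignment rule must, at the
profile where agent 1 reports `b ≻ a ≻ c ≻ d` and agent 2 reports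
`b ≻ c ≻ a ≻ d`, return the assignment giving agent 1 object `a` with
probability `1` and `b, d` each with probability `1/2`, and agent 2 object `c`
with probability `1` and `b, d` each with probability `1/2`. -/
theorem rule_value_at_bacd_bcad_profile
    (f : (Fin 2 → Pref 4) → Fin 2 → Fin 4 → ℝ)
    (hRA : ∀ pref, ValidProfile pref → IsRandomAssignment 2 4 2 (f pref))
    (hAnon : Anonymous 2 4 f) (hNeut : Neutral 2 4 f)
    (hEff : ∀ pref, ValidProfile pref → SDEfficientAssignment 2 4 2 pref (f pref)) :
    f ![prefOfRank ![1, 0, 2, 3], prefOfRank ![2, 0, 1, 3]] =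
      ![![1, 1/2, 0, 1/2], ![0, 1/2, 1, 1/2]] := by
  show f bacdBcadProfile = _
  have hvalid := validProfile_bacdBcadProfile
  have hform := eq_symmetricAssignment (hRA _ hvalid).2.1 <|
    apply_eq_apply_of_profile_invariant hAnon hNeut hvalid _ _ bacdBcadProfile_swap_invariant
  have hzero : f bacdBcadProfile 0 2 = 0 := by
    set t := f bacdBcadProfile 0 2
    have ht : 0 ≤ t := ((hRA _ hvalid).1 0 2).1
    refine (ht.eq_or_lt.resolve_right fun hpos => hEff _ hvalid ?_).symm
    rw [hform]
    exact ⟨symmetricAssignment 0, isRandomAssignment_symmetricAssignment_zero,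
      sdPrefers_symmetricAssignment_zero ht, 0, sdPrefers_symmetricAssignment_zero ht 0,
      not_sdPrefers_symmetricAssignment_zero hpos⟩
  rw [hform, hzero]
  norm_num
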